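/- Let X be a real random variable with E X = 0 and finite sub-exponential norm ‖X‖_se > 0. Then for every c ∈ (0,1) and every λ ∈ (−c/‖X‖_se, c/‖X‖_se): E exp(λX) ≤ exp((λ²/2)·(2·‖X‖_se²/(1 − c))). -/

import Mathlib

/-!
Write `e^{λX} = 1 + λX + (e^{λX} - 1 - λX)` and bound the remainder by
`e^{|λX|} - 1 - |λX| = ∑_{k ≥ 2} |λX|^k / k!`. By the definition of `‖X‖_se`,
`E |λX|^k / k! ≤ q^k` with `q = |λ| ‖X‖_se < c < 1`, so integrating the series termwise gives
`E e^{λX} ≤ 1 + λ E X + q² / (1 - q) ≤ 1 + λ² ‖X‖_se² / (1 - c) ≤ exp (λ² ‖X‖_se² / (1 - c))`.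
-/

open MeasureTheory ProbabilityTheory Real

noncomputable def subExpNorm {Ω : Type*} [MeasureSpace Ω] (X : Ω → ℝ) : ℝ :=
  ⨆ k : {k : ℕ // 1 ≤ k}, ((∫ ω, |X ω| ^ (k : ℕ)) / (Nat.factorial k)) ^ (((k : ℕ) : ℝ)⁻¹)

open Nat

theorem Real.hasSum_pow_div_factorial_add_two (x : ℝ) :
    HasSum (fun k ↦ x ^ (k + 2) / (k + 2)!) (exp x - 1 - x) := by
  have := (hasSum_nat_add_iff' 2).2 (NormedSpace.expSeries_div_hasSum_exp x)
  rwa [← exp_eq_exp_ℝ, Finset.sum_range_succ, Finset.sum_range_one, pow_zero, pow_one,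
    factorial_zero, factorial_one, cast_one, div_one, div_one, sub_add_eq_sub_sub] at this

theorem Real.exp_sub_one_sub_le_exp_abs_sub_one_sub_abs (x : ℝ) :
    exp x - 1 - x ≤ exp |x| - 1 - |x| := by
  rcases le_or_gt 0 x with hx | hx
  · rw [abs_of_nonneg hx]
  · rw [abs_of_neg hx]
    have hsinh := self_lt_sinh_iff.2 (neg_pos.2 hx)
    rw [sinh_eq, neg_neg] at hsinh
    linarith

theorem MeasureTheory.Integrable.of_hasSum {α E : Type*} [MeasurableSpace α] {μ : Measure α}
    [NormedAddCommGroup E] {F : ℕ → α → E} {f : α → E}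
    (hF_int : ∀ n, Integrable (F n) μ) (hF_sum : Summable fun n ↦ ∫ a, ‖F n a‖ ∂μ)
    (hf : ∀ᵐ a ∂μ, HasSum (F · a) (f a)) : Integrable f μ := by
  refine ⟨aestronglyMeasurable_of_tendsto_ae _
    (fun n ↦ Finset.aestronglyMeasurable_fun_sum _ fun i _ ↦ (hF_int i).1)
    (hf.mono fun a ha ↦ ha.tendsto_sum_nat), ?_⟩
  calc ∫⁻ a, ‖f a‖ₑ ∂μ ≤ ∫⁻ a, ∑' n, ‖F n a‖ₑ ∂μ :=
        lintegral_mono_ae (hf.mono fun a ha ↦ ha.tsum_eq ▸ enorm_tsum_le_tsum_enorm)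
    _ = ∑' n, ENNReal.ofReal (∫ a, ‖F n a‖ ∂μ) := by
        rw [lintegral_tsum fun n ↦ (hF_int n).1.enorm]
        congr with n
        rw [ofReal_integral_norm_eq_lintegral_enorm (hF_int n)]
    _ < ⊤ := by
        rw [← ENNReal.ofReal_tsum_of_nonneg (fun n ↦ integral_nonneg fun _ ↦ norm_nonneg _) hF_sum]
        exact ENNReal.ofReal_lt_top

theorem MeasureTheory.integral_exp_le_one_add_integral_add_integral_exp_abs_sub_one_sub_abs
    {α : Type*} [MeasurableSpace α] {μ : Measure α} [IsProbabilityMeasure μ] {Y : α → ℝ}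
    (hY : Integrable Y μ) (hG : Integrable (fun a ↦ exp |Y a| - 1 - |Y a|) μ) :
    ∫ a, exp (Y a) ∂μ ≤ 1 + (∫ a, Y a ∂μ) + ∫ a, exp |Y a| - 1 - |Y a| ∂μ := by
  have hY₁ : Integrable (fun a ↦ 1 + Y a) μ := (integrable_const 1).add hY
  calc ∫ a, exp (Y a) ∂μ ≤ ∫ a, 1 + Y a + (exp |Y a| - 1 - |Y a|) ∂μ := by
        refine integral_mono_of_nonneg (ae_of_all _ fun a ↦ (exp_pos _).le) (hY₁.add hG)
          (ae_of_all _ fun a ↦ ?_)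
        linarith [exp_sub_one_sub_le_exp_abs_sub_one_sub_abs (Y a)]
    _ = 1 + (∫ a, Y a ∂μ) + ∫ a, exp |Y a| - 1 - |Y a| ∂μ := by
        rw [integral_add hY₁ hG, integral_add (integrable_const 1) hY, integral_const,
          probReal_univ, one_smul]

section SubExponential

variable {Ω : Type*} [MeasureSpace Ω] {X : Ω → ℝ}

noncomputable def normalizedMoment (X : Ω → ℝ) (k : ℕ) : ℝ :=
  ((∫ ω, |X ω| ^ k) / k !) ^ ((k : ℝ)⁻¹)

theorem subExpNorm_nonneg : 0 ≤ subExpNorm X :=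
  Real.iSup_nonneg fun _ ↦ rpow_nonneg (div_nonneg (integral_nonneg fun _ ↦ by positivity)
    (cast_nonneg _)) _

theorem integral_abs_pow_le_subExpNorm_pow_mul_factorial
    (hXbdd : BddAbove (Set.range fun k : {k : ℕ // 1 ≤ k} ↦ normalizedMoment X k))
    {k : ℕ} (hk : 1 ≤ k) :
    ∫ ω, |X ω| ^ k ≤ subExpNorm X ^ k * k ! := by
  have hnonneg : 0 ≤ (∫ ω, |X ω| ^ k) / k ! :=
    div_nonneg (integral_nonneg fun _ ↦ by positivity) (cast_nonneg _)
  have hroot : normalizedMoment X k ≤ subExpNorm X := le_ciSup hXbdd ⟨k, hk⟩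
  have := pow_le_pow_left₀ (rpow_nonneg hnonneg _) hroot k
  rwa [rpow_inv_natCast_pow hnonneg (by omega), div_le_iff₀ (by positivity)] at this

theorem integral_abs_mul_pow_div_factorial_le
    (hXbdd : BddAbove (Set.range fun k : {k : ℕ // 1 ≤ k} ↦ normalizedMoment X k))
    (t : ℝ) {k : ℕ} (hk : 1 ≤ k) :
    ∫ ω, |t * X ω| ^ k / k ! ≤ (|t| * subExpNorm X) ^ k := by
  simp_rw [abs_mul, mul_pow]
  rw [integral_div, integral_const_mul, div_le_iff₀ (by positivity), mul_assoc]
  gcongr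
  exact integral_abs_pow_le_subExpNorm_pow_mul_factorial hXbdd hk

theorem integrable_exp_abs_mul_sub_one_sub_and_integral_le
    (hXint : ∀ k : ℕ, 1 ≤ k → Integrable (fun ω ↦ |X ω| ^ k))
    (hXbdd : BddAbove (Set.range fun k : {k : ℕ // 1 ≤ k} ↦ normalizedMoment X k))
    {t : ℝ} (ht : |t| * subExpNorm X < 1) :
    Integrable (fun ω ↦ exp |t * X ω| - 1 - |t * X ω|) ∧
      ∫ ω, exp |t * X ω| - 1 - |t * X ω| ≤
        (|t| * subExpNorm X) ^ 2 / (1 - |t| * subExpNorm X) := by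
  set q := |t| * subExpNorm X
  have hq : 0 ≤ q := mul_nonneg (abs_nonneg t) subExpNorm_nonneg
  set F : ℕ → Ω → ℝ := fun k ω ↦ |t * X ω| ^ (k + 2) / (k + 2)!
  have hF_int : ∀ k, Integrable (F k) := fun k ↦ by
    simpa only [F, abs_mul, mul_pow] using ((hXint (k + 2) (by omega)).const_mul _).div_const _
  have hF_le : ∀ k, ∫ ω, F k ω ≤ q ^ (k + 2) := fun k ↦
    integral_abs_mul_pow_div_factorial_le hXbdd t (by omega)
  have hgeom : HasSum (fun k ↦ q ^ (k + 2)) (q ^ 2 / (1 - q)) := by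
    simpa [pow_add, mul_comm, div_eq_mul_inv] using
      (hasSum_geometric_of_lt_one hq ht).mul_left (q ^ 2)
  have hF_sum : Summable fun k ↦ ∫ ω, ‖F k ω‖ := by
    refine hgeom.summable.of_nonneg_of_le (fun k ↦ integral_nonneg fun _ ↦ norm_nonneg _)
      fun k ↦ ?_
    simpa [F, Real.norm_eq_abs, abs_div] using hF_le k
  have hF_hasSum : ∀ ω, HasSum (F · ω) (exp |t * X ω| - 1 - |t * X ω|) := fun ω ↦
    hasSum_pow_div_factorial_add_two _
  refine ⟨Integrable.of_hasSum hF_int hF_sum (ae_of_all _ hF_hasSum), ?_⟩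
  have hintegral := hasSum_integral_of_summable_integral_norm hF_int hF_sum
  simp only [fun ω ↦ (hF_hasSum ω).tsum_eq] at hintegral
  exact hasSum_le hF_le hintegral hgeom

end SubExponential

/-- If `X` is centered with finite positive sub-exponential norm, then for every `c ∈ (0,1)`
and `λ ∈ (−c/‖X‖_se, c/‖X‖_se)` we have `E exp(λX) ≤ exp((λ²/2)·(2‖X‖_se²/(1 − c)))`. -/
theorem mgf_exp_bound_of_subExp
    {Ω : Type*} [MeasureSpace Ω] [IsProbabilityMeasure (volume : Measure Ω)]
    (X : Ω → ℝ) (hXmeas : Measurable X)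
    (hXcent : (∫ ω, X ω) = 0)
    -- finiteness of the sub-exponential norm: all absolute moments exist and
    -- the defining family is bounded above
    (hXint : ∀ k : ℕ, 1 ≤ k → Integrable (fun ω => |X ω| ^ k))
    (hXbdd : BddAbove (Set.range fun k : {k : ℕ // 1 ≤ k} =>
      ((∫ ω, |X ω| ^ (k : ℕ)) / (Nat.factorial k)) ^ (((k : ℕ) : ℝ)⁻¹)))
    (hXpos : 0 < subExpNorm X)
    (c : ℝ) (hc : c ∈ Set.Ioo (0 : ℝ) 1)
    (l : ℝ) (hl : l ∈ Set.Ioo (-(c / subExpNorm X)) (c / subExpNorm X)) :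
    (∫ ω, Real.exp (l * X ω)) ≤
      Real.exp (l ^ 2 / 2 * (2 * subExpNorm X ^ 2 / (1 - c))) := by
  set K := subExpNorm X
  have hlc : |l| * K < c := (lt_div_iff₀ hXpos).1 (abs_lt.2 hl)
  have hX : Integrable X :=
    (integrable_norm_iff hXmeas.aestronglyMeasurable).1 (by simpa using hXint 1 le_rfl)
  obtain ⟨hG, hG_le⟩ :=
    integrable_exp_abs_mul_sub_one_sub_and_integral_le hXint hXbdd (hlc.trans hc.2)
  have hratio : (|l| * K) ^ 2 / (1 - |l| * K) ≤ l ^ 2 / 2 * (2 * K ^ 2 / (1 - c)) := by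
    rw [show l ^ 2 / 2 * (2 * K ^ 2 / (1 - c)) = (|l| * K) ^ 2 / (1 - c) by
      rw [mul_pow, sq_abs]; ring]
    exact div_le_div_of_nonneg_left (by positivity) (by linarith [hc.2]) (by linarith)
  calc ∫ ω, exp (l * X ω)
      ≤ 1 + (∫ ω, l * X ω) + ∫ ω, exp |l * X ω| - 1 - |l * X ω| :=
        integral_exp_le_one_add_integral_add_integral_exp_abs_sub_one_sub_abs (hX.const_mul l) hG
    _ ≤ l ^ 2 / 2 * (2 * K ^ 2 / (1 - c)) + 1 := by
        rw [integral_const_mul, hXcent]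
        linarith
    _ ≤ exp (l ^ 2 / 2 * (2 * K ^ 2 / (1 - c))) := add_one_le_exp _
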